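/- Let C be a stochastically increasing bivariate copula and set h_v(t) := ∂₁C(t,v). Then ξ(C) = ψ(C) if and only if there exist non-decreasing measurable functions A, B : [0,1] → [0,1] and a measurable function α : [0,1] → [0,1] such that for almost every v ∈ [0,1] one has h_v(t) = 𝟙_{t < A(v)} + α(v)·𝟙_{(A(v),B(v))}(t) for almost every t ∈ [0,1]. -/

import Mathlib

/-!
Write `h_v = ∂₁C(·, v)`. Since `C(·, v)` is monotone and 1-Lipschitz, `h_v ∈ [0, 1]` a.e.,
`∫₀¹ h_v = v` and `∫₀^v h_v = C(v, v)`. As `∫₀¹ (𝟙_{t<v} - h_v) = 0`, for every constant `c`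
  `C(v, v) - ∫₀¹ h_v² = ∫₀¹ (h_v(t) - c) (𝟙_{t<v} - h_v(t)) dt`.
For non-increasing `h_v` and `c = h_v(v)` both factors have the same sign, so `ξ(C) ≤ ψ(C)`,
with equality iff for a.e. `v` the integrand vanishes a.e. For a non-increasing `h_v` this
means `h_v = 1` before `A(v) = |{h_v ≥ 1}|`, `h_v = 0` after `B(v) = |{h_v > 0}|` and
`h_v = h_v(v)` in between, a value that `∫₀¹ h_v = v` pins down; conversely such step
profiles make the integrand vanish. `A` and `B` are monotone since `C` is 2-increasing,
so `h_v` increases with `v`.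
-/

open MeasureTheory Set

noncomputable section

def IsCopula (C : ℝ → ℝ → ℝ) : Prop :=
  (∀ u ∈ Icc (0:ℝ) 1, ∀ v ∈ Icc (0:ℝ) 1, C u v ∈ Icc (0:ℝ) 1) ∧
  (∀ u ∈ Icc (0:ℝ) 1, C u 0 = 0 ∧ C u 1 = u) ∧
  (∀ v ∈ Icc (0:ℝ) 1, C 0 v = 0 ∧ C 1 v = v) ∧
  (∀ u₁ ∈ Icc (0:ℝ) 1, ∀ u₂ ∈ Icc (0:ℝ) 1, ∀ v₁ ∈ Icc (0:ℝ) 1, ∀ v₂ ∈ Icc (0:ℝ) 1,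
    u₁ ≤ u₂ → v₁ ≤ v₂ → 0 ≤ C u₂ v₂ - C u₁ v₂ - C u₂ v₁ + C u₁ v₁)

/-- The (a.e. defined) partial derivative of `C` with respect to its first argument. -/
def d1 (C : ℝ → ℝ → ℝ) (t v : ℝ) : ℝ := deriv (fun s => C s v) t

/-- Chatterjee's rank correlation. -/
def xi (C : ℝ → ℝ → ℝ) : ℝ :=
  6 * (∫ v in (0:ℝ)..1, ∫ t in (0:ℝ)..1, (d1 C t v) ^ 2) - 2

/-- Spearman's footrule. -/
def psi (C : ℝ → ℝ → ℝ) : ℝ :=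
  6 * (∫ v in (0:ℝ)..1, C v v) - 2

/-- Stochastically increasing: for each `v`, `t ↦ ∂₁C(t,v)` agrees a.e. on `[0,1]`
with a non-increasing function. -/
def IsSI (C : ℝ → ℝ → ℝ) : Prop :=
  ∀ v ∈ Icc (0:ℝ) 1, ∃ g : ℝ → ℝ, AntitoneOn g (Icc (0:ℝ) 1) ∧
    (∀ᵐ t ∂(volume.restrict (Icc (0:ℝ) 1)), d1 C t v = g t)

open Filter Topology

local notation "vol₀₁" => volume.restrict (Icc (0:ℝ) 1)

lemma deriv_nonneg_of_monotoneOn {f : ℝ → ℝ} {s : Set ℝ} {x : ℝ} (hs : s ∈ 𝓝 x)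
    (hf : MonotoneOn f s) : 0 ≤ deriv f x := by
  rw [← derivWithin_of_mem_nhds hs]
  exact hf.derivWithin_nonneg

lemma lipschitzOnWith_one_of_monotoneOn_of_monotoneOn_sub {f : ℝ → ℝ} {s : Set ℝ}
    (hf : MonotoneOn f s) (hf' : MonotoneOn (fun x => x - f x) s) : LipschitzOnWith 1 f s := by
  refine LipschitzOnWith.of_dist_le_mul fun x hx y hy => ?_
  wlog hxy : x ≤ y generalizing x y
  · rw [dist_comm, dist_comm x]
    exact this y hy x hx (le_of_not_ge hxy)
  have h₁ := hf hx hy hxy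
  have h₂ := hf' hx hy hxy
  rw [NNReal.coe_one, one_mul, Real.dist_eq, Real.dist_eq, abs_sub_comm, abs_sub_comm x,
    abs_of_nonneg (sub_nonneg.2 h₁), abs_of_nonneg (sub_nonneg.2 hxy)]
  linarith

section FiniteMeasure

variable {α : Type*} [MeasurableSpace α] {μ : Measure α} [IsFiniteMeasure μ] {f : α → ℝ}

lemma integrable_sq_of_ae_mem_Icc (hf : AEMeasurable f μ) (h01 : ∀ᵐ x ∂μ, f x ∈ Icc 0 1) :
    Integrable (fun x => f x ^ 2) μ :=
  .of_mem_Icc 0 1 (hf.pow_const 2) (h01.mono fun _ hx => ⟨sq_nonneg _, pow_le_one₀ hx.1 hx.2⟩)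

lemma measureReal_preimage_mono_of_ae_le {f' : α → ℝ} {U : Set ℝ} (hU : IsUpperSet U)
    (hff' : f ≤ᵐ[μ] f') : μ.real (f ⁻¹' U) ≤ μ.real (f' ⁻¹' U) :=
  ENNReal.toReal_mono (measure_ne_top _ _) (measure_mono_ae (hff'.mono fun _ hx => hU hx))

lemma measureReal_preimage_Ici_one_le_integral (hf : Measurable f)
    (h01 : ∀ᵐ x ∂μ, f x ∈ Icc 0 1) : μ.real (f ⁻¹' Ici 1) ≤ ∫ x, f x ∂μ := by
  rw [← integral_indicator_one (hf measurableSet_Ici)]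
  refine integral_mono_ae ((integrable_const 1).indicator (hf measurableSet_Ici))
    (.of_mem_Icc 0 1 hf.aemeasurable h01) ?_
  filter_upwards [h01] with x hx
  by_cases hx1 : 1 ≤ f x <;> simp [hx1, hx.1]

lemma integral_le_measureReal_preimage_Ioi_zero (hf : Measurable f)
    (h01 : ∀ᵐ x ∂μ, f x ∈ Icc 0 1) : ∫ x, f x ∂μ ≤ μ.real (f ⁻¹' Ioi 0) := by
  rw [← integral_indicator_one (hf measurableSet_Ioi)]
  refine integral_mono_ae (.of_mem_Icc 0 1 hf.aemeasurable h01)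
    ((integrable_const 1).indicator (hf measurableSet_Ioi)) ?_
  filter_upwards [h01] with x hx
  by_cases hx0 : 0 < f x
  · simp [hx0, hx.2]
  · simp [le_antisymm (not_lt.1 hx0) hx.1]

end FiniteMeasure

lemma Icc_inter_Iio_of_le {a : ℝ} (ha : a ≤ 1) : Icc (0:ℝ) 1 ∩ Iio a = Ico 0 a := by
  ext t
  constructor
  · rintro ⟨⟨ht0, -⟩, hta⟩; exact ⟨ht0, hta⟩
  · rintro ⟨ht0, hta⟩; exact ⟨⟨ht0, hta.le.trans ha⟩, hta⟩

section StepProfile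

variable {a b c c' : ℝ}

def stepProfile (a b c t : ℝ) : ℝ :=
  (if t < a then 1 else 0) + c * (if t ∈ Ioo a b then 1 else 0)

lemma stepProfile_eq_indicator (a b c : ℝ) :
    stepProfile a b c = (Iio a).indicator 1 + c • (Ioo a b).indicator 1 := by
  funext t
  simp [stepProfile, indicator]

lemma stepProfile_max_right : stepProfile a (max a b) c = stepProfile a b c := by
  rcases le_total a b with hab | hba
  · rw [max_eq_right hab]
  · funext t
    simp [stepProfile, max_eq_left hba, Ioo_eq_empty_of_le hba]

lemma stepProfile_congr (hc : c * (b - a) = c' * (b - a)) :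
    stepProfile a b c = stepProfile a b c' := by
  funext t
  by_cases ht : t ∈ Ioo a b
  · rw [mul_right_cancel₀ (sub_ne_zero.2 (ht.1.trans ht.2).ne') hc]
  · simp [stepProfile, ht]

lemma integral_stepProfile (ha : 0 ≤ a) (hab : a ≤ b) (hb : b ≤ 1) :
    ∫ t in Icc 0 1, stepProfile a b c t = a + c * (b - a) := by
  have hIoo : Ioo a b ∩ Icc 0 1 = Ioo a b :=
    inter_eq_left.2 fun t ht => ⟨ha.trans ht.1.le, ht.2.le.trans hb⟩
  have hi {s : Set ℝ} (hs : MeasurableSet s) :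
      Integrable (s.indicator 1) (vol₀₁) :=
    (integrable_const (1:ℝ)).indicator hs
  rw [stepProfile_eq_indicator]
  simp only [Pi.add_apply, Pi.smul_apply, smul_eq_mul]
  rw [integral_add (hi measurableSet_Iio) ((hi measurableSet_Ioo).const_mul c), integral_const_mul,
    integral_indicator_one measurableSet_Iio, integral_indicator_one measurableSet_Ioo,
    measureReal_restrict_apply measurableSet_Iio, measureReal_restrict_apply measurableSet_Ioo,
    inter_comm, Icc_inter_Iio_of_le (hab.trans hb), hIoo,
    Real.volume_real_Ico_of_le ha, Real.volume_real_Ioo_of_le hab, sub_zero]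

end StepProfile

section LevelSets

variable {g : ℝ → ℝ} {t : ℝ} {U : Set ℝ}

lemma AntitoneOn.mem_of_lt_measureReal_preimage (hg : AntitoneOn g (Icc 0 1))
    (hU : IsUpperSet U) (ht : t ∈ Icc (0:ℝ) 1)
    (hlt : t < (vol₀₁).real (g ⁻¹' U)) : g t ∈ U := by
  by_contra hgt
  have hsub : g ⁻¹' U ∩ Icc 0 1 ⊆ Ico 0 t := fun s ⟨hsU, hs⟩ =>
    ⟨hs.1, lt_of_not_ge fun hts => hgt (hU (hg ht hs hts) hsU)⟩
  have := measureReal_mono hsub (measure_Ico_lt_top (μ := volume)).ne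
  rw [← measureReal_restrict_apply' measurableSet_Icc, Real.volume_real_Ico_of_le ht.1,
    sub_zero] at this
  linarith

lemma AntitoneOn.notMem_of_measureReal_preimage_lt (hg : AntitoneOn g (Icc 0 1))
    (hU : IsUpperSet U) (ht : t ∈ Icc (0:ℝ) 1)
    (hlt : (vol₀₁).real (g ⁻¹' U) < t) : g t ∉ U := by
  intro hgt
  have hsub : Icc 0 t ⊆ g ⁻¹' U ∩ Icc 0 1 := fun s hs =>
    have hs' : s ∈ Icc (0:ℝ) 1 := ⟨hs.1, hs.2.trans ht.2⟩
    ⟨hU (hg hs' ht hs.2) hgt, hs'⟩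
  have := measureReal_mono hsub
    ((measure_mono inter_subset_right).trans_lt (measure_Icc_lt_top (μ := volume))).ne
  rw [← measureReal_restrict_apply' measurableSet_Icc, Real.volume_real_Icc_of_le ht.1,
    sub_zero] at this
  linarith

end LevelSets

section Profile

variable {h g : ℝ → ℝ} {v : ℝ}

lemma integrable_sub_mul_indicator_sub (hm : Measurable h)
    (h01 : ∀ᵐ t ∂vol₀₁, h t ∈ Icc 0 1) (c : ℝ) :
    Integrable (fun t => (h t - c) * ((Iio v).indicator 1 t - h t))
      (vol₀₁) := by
  have hI : Integrable h (vol₀₁) := .of_mem_Icc 0 1 hm.aemeasurable h01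
  refine ((hI.sub (integrable_const c)).bdd_mul (f := fun t => (Iio v).indicator 1 t - h t)
    (c := 1) ((measurable_one.indicator measurableSet_Iio).sub hm).aestronglyMeasurable
    ?_).congr (.of_forall fun t => mul_comm _ _)
  filter_upwards [h01] with t ht
  rw [Real.norm_eq_abs, abs_le]
  by_cases htv : t ∈ Iio v
  · rw [indicator_of_mem htv, Pi.one_apply]; constructor <;> linarith [ht.1, ht.2]
  · rw [indicator_of_notMem htv]; constructor <;> linarith [ht.1, ht.2]

lemma integral_sub_mul_indicator_sub (hm : Measurable h)
    (h01 : ∀ᵐ t ∂vol₀₁, h t ∈ Icc 0 1) (hv : v ∈ Icc (0:ℝ) 1)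
    (hint : ∫ t in Icc 0 1, h t = v) (c : ℝ) :
    ∫ t in Icc 0 1, (h t - c) * ((Iio v).indicator 1 t - h t) =
      (∫ t in Ico 0 v, h t) - ∫ t in Icc 0 1, h t ^ 2 := by
  have hI : Integrable h (vol₀₁) := .of_mem_Icc 0 1 hm.aemeasurable h01
  have hI₁ : Integrable ((Iio v).indicator 1) (vol₀₁) :=
    (integrable_const (1:ℝ)).indicator measurableSet_Iio
  have hIh : Integrable ((Iio v).indicator h) (vol₀₁) :=
    hI.indicator measurableSet_Iio
  have hI₂ := integrable_sq_of_ae_mem_Icc hm.aemeasurable h01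
  have hA : Integrable (fun t => (Iio v).indicator h t - h t ^ 2)
      (vol₀₁) := hIh.sub hI₂
  have hB : Integrable (fun t => c * ((Iio v).indicator 1 t - h t))
      (vol₀₁) := (hI₁.sub hI).const_mul c
  have hexpand : ∀ t, (h t - c) * ((Iio v).indicator 1 t - h t) =
      ((Iio v).indicator h t - h t ^ 2) - c * ((Iio v).indicator 1 t - h t) := by
    intro t
    by_cases ht : t ∈ Iio v <;> simp [ht] <;> ring
  simp_rw [hexpand]
  rw [integral_sub hA hB, integral_sub hIh hI₂, integral_const_mul, integral_sub hI₁ hI,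
    setIntegral_indicator measurableSet_Iio,
    Icc_inter_Iio_of_le hv.2, integral_indicator_one measurableSet_Iio,
    measureReal_restrict_apply measurableSet_Iio, inter_comm, Icc_inter_Iio_of_le hv.2,
    Real.volume_real_Ico_of_le hv.1, hint]
  ring

lemma ae_sub_mul_indicator_sub_nonneg (h01 : ∀ᵐ t ∂vol₀₁, h t ∈ Icc 0 1)
    (hv : v ∈ Icc (0:ℝ) 1) (hg : AntitoneOn g (Icc 0 1)) (hhg : h =ᵐ[vol₀₁] g) :
    0 ≤ᵐ[vol₀₁] fun t => (h t - g v) * ((Iio v).indicator 1 t - h t) := by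
  filter_upwards [hhg, h01, ae_restrict_mem measurableSet_Icc] with t hgt ht01 ht
  rw [Pi.zero_apply, hgt]
  rw [hgt] at ht01
  by_cases htv : t ∈ Iio v
  · rw [indicator_of_mem htv, Pi.one_apply]
    exact mul_nonneg (sub_nonneg.2 (hg ht hv (le_of_lt htv))) (sub_nonneg.2 ht01.2)
  · rw [indicator_of_notMem htv, zero_sub]
    exact mul_nonneg_of_nonpos_of_nonpos (sub_nonpos.2 (hg hv ht (not_lt.1 htv)))
      (neg_nonpos.2 ht01.1)

lemma integral_sq_le_setIntegral_Ico (hm : Measurable h)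
    (h01 : ∀ᵐ t ∂vol₀₁, h t ∈ Icc 0 1) (hv : v ∈ Icc (0:ℝ) 1)
    (hint : ∫ t in Icc 0 1, h t = v) (hg : AntitoneOn g (Icc 0 1)) (hhg : h =ᵐ[vol₀₁] g) :
    ∫ t in Icc 0 1, h t ^ 2 ≤ ∫ t in Ico 0 v, h t := by
  rw [← sub_nonneg, ← integral_sub_mul_indicator_sub hm h01 hv hint (g v)]
  exact integral_nonneg_of_ae (ae_sub_mul_indicator_sub_nonneg h01 hv hg hhg)

def plateauLength (h : ℝ → ℝ) : ℝ := (vol₀₁).real (h ⁻¹' Ici 1)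

def supportLength (h : ℝ → ℝ) : ℝ := (vol₀₁).real (h ⁻¹' Ioi 0)

lemma plateauLength_mem_Icc (hm : Measurable h) (h01 : ∀ᵐ t ∂vol₀₁, h t ∈ Icc 0 1) :
    plateauLength h ∈ Icc 0 (∫ t in Icc 0 1, h t) :=
  ⟨measureReal_nonneg, measureReal_preimage_Ici_one_le_integral hm h01⟩

lemma supportLength_mem_Icc (hm : Measurable h) (h01 : ∀ᵐ t ∂vol₀₁, h t ∈ Icc 0 1) :
    supportLength h ∈ Icc (∫ t in Icc 0 1, h t) 1 := by
  refine ⟨integral_le_measureReal_preimage_Ioi_zero hm h01, ?_⟩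
  calc supportLength h ≤ (vol₀₁).real univ := measureReal_mono (subset_univ _)
    _ = 1 := by simp

lemma ae_eq_stepProfile_of_ae_sub_mul_indicator_sub_eq_zero
    (h01 : ∀ᵐ t ∂vol₀₁, h t ∈ Icc 0 1) (hg : AntitoneOn g (Icc 0 1)) (hhg : h =ᵐ[vol₀₁] g)
    (c : ℝ) (hzero : ∀ᵐ t ∂vol₀₁, (h t - c) * ((Iio v).indicator 1 t - h t) = 0) :
    h =ᵐ[vol₀₁] stepProfile (plateauLength h) (supportLength h) c := by
  have hA : plateauLength h = plateauLength g := measureReal_congr (hhg.preimage _)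
  have hB : supportLength h = supportLength g := measureReal_congr (hhg.preimage _)
  have hAB : plateauLength h ≤ supportLength h :=
    measureReal_mono (preimage_mono (Ici_subset_Ioi.2 zero_lt_one))
  filter_upwards [hhg, h01, hzero, ae_restrict_mem measurableSet_Icc,
    Measure.ae_ne _ (plateauLength h), Measure.ae_ne _ (supportLength h)]
    with t hgt ht01 htz ht htA htB
  rw [hgt] at ht01 htz ⊢
  simp only [stepProfile, mem_Ioo]
  rcases htA.lt_or_gt with htA | htA
  · have htA' : t < plateauLength g := hA ▸ htA
    have : g t = 1 := le_antisymm ht01.2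
      (hg.mem_of_lt_measureReal_preimage (isUpperSet_Ici 1) ht htA')
    simp [htA, htA.not_gt, this]
  have htA' : plateauLength g < t := hA ▸ htA
  rcases htB.lt_or_gt with htB | htB
  · have htB' : t < supportLength g := hB ▸ htB
    have h1 : g t < 1 := not_le.1
      (hg.notMem_of_measureReal_preimage_lt (isUpperSet_Ici 1) ht htA')
    have h0 : 0 < g t := hg.mem_of_lt_measureReal_preimage (isUpperSet_Ioi 0) ht htB'
    have hne : (Iio v).indicator 1 t - g t ≠ 0 := by
      by_cases htv : t ∈ Iio v
      · rw [indicator_of_mem htv, Pi.one_apply]; linarith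
      · rw [indicator_of_notMem htv]; linarith
    have : g t = c := sub_eq_zero.1 ((mul_eq_zero.1 htz).resolve_right hne)
    simp [htA, htB, htA.not_gt, this]
  · have htB' : supportLength g < t := hB ▸ htB
    have : g t = 0 := le_antisymm
      (not_lt.1 (hg.notMem_of_measureReal_preimage_lt (isUpperSet_Ioi 0) ht htB')) ht01.1
    simp [(hAB.trans_lt htB).not_gt, htB.not_gt, this]

lemma ae_eq_stepProfile_of_integral_sq_eq (hm : Measurable h)
    (h01 : ∀ᵐ t ∂vol₀₁, h t ∈ Icc 0 1) (hv : v ∈ Icc (0:ℝ) 1)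
    (hint : ∫ t in Icc 0 1, h t = v) (hg : AntitoneOn g (Icc 0 1)) (hhg : h =ᵐ[vol₀₁] g)
    (heq : ∫ t in Icc 0 1, h t ^ 2 = ∫ t in Ico 0 v, h t) :
    h =ᵐ[vol₀₁] stepProfile (plateauLength h) (supportLength h)
      ((v - plateauLength h) / (supportLength h - plateauLength h)) := by
  have hzero := (integral_eq_zero_iff_of_nonneg_ae (ae_sub_mul_indicator_sub_nonneg h01 hv hg hhg)
    (integrable_sub_mul_indicator_sub hm h01 _)).1
    (by rw [integral_sub_mul_indicator_sub hm h01 hv hint, heq, sub_self])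
  have hstep := ae_eq_stepProfile_of_ae_sub_mul_indicator_sub_eq_zero h01 hg hhg (g v) hzero
  have hA := plateauLength_mem_Icc hm h01
  have hB := supportLength_mem_Icc hm h01
  rw [hint] at hA hB
  have hmid : v - plateauLength h = g v * (supportLength h - plateauLength h) := by
    have := integral_congr_ae hstep
    rw [hint, integral_stepProfile hA.1 (hA.2.trans hB.1) hB.2] at this
    linarith
  rwa [stepProfile_congr
    (c' := (v - plateauLength h) / (supportLength h - plateauLength h))] at hstep
  rw [div_mul_cancel_of_imp fun h0 => by rw [hmid, h0, mul_zero], hmid]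

lemma integral_sq_eq_of_ae_eq_stepProfile (hm : Measurable h)
    (h01 : ∀ᵐ t ∂vol₀₁, h t ∈ Icc 0 1) (hv : v ∈ Icc (0:ℝ) 1)
    (hint : ∫ t in Icc 0 1, h t = v) {a b c : ℝ} (ha : a ∈ Icc (0:ℝ) 1) (hb : b ∈ Icc (0:ℝ) 1)
    (hc : c ∈ Icc (0:ℝ) 1) (hstep : h =ᵐ[vol₀₁] stepProfile a b c) :
    ∫ t in Icc 0 1, h t ^ 2 = ∫ t in Ico 0 v, h t := by
  rw [← stepProfile_max_right] at hstep
  have hab : a ≤ max a b := le_max_left a b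
  have hmid : v = a + c * (max a b - a) := by
    rw [← hint, integral_congr_ae hstep, integral_stepProfile ha.1 hab (max_le ha.2 hb.2)]
  have hav : a ≤ v := by nlinarith [hc.1]
  have hvb : v ≤ max a b := by nlinarith [hc.2]
  rw [eq_comm, ← sub_eq_zero, ← integral_sub_mul_indicator_sub hm h01 hv hint c]
  refine integral_eq_zero_of_ae ?_
  filter_upwards [hstep, Measure.ae_ne _ a, Measure.ae_ne _ (max a b)] with t ht hta htb
  rw [ht, Pi.zero_apply]
  simp only [stepProfile, mem_Ioo]
  rcases hta.lt_or_gt with hta | hta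
  · simp [hta, hta.trans_le hav, hta.not_gt]
  rcases htb.lt_or_gt with htb | htb
  · simp [hta, htb, hta.not_gt]
  · simp [(hab.trans_lt htb).not_gt, htb.not_gt, (hvb.trans_lt htb).not_gt]

end Profile

lemma measurable_d1 (C : ℝ → ℝ → ℝ) (v : ℝ) : Measurable fun t => d1 C t v :=
  measurable_deriv _

lemma integral_sq_d1_eq_setIntegral (C : ℝ → ℝ → ℝ) (v : ℝ) :
    ∫ t in (0:ℝ)..1, (d1 C t v) ^ 2 = ∫ t in Icc 0 1, (d1 C t v) ^ 2 := by
  rw [intervalIntegral.integral_of_le zero_le_one, integral_Icc_eq_integral_Ioc]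

/-- `A(v)` of the equality case, extended constantly outside `[0, 1]` so that it is monotone,
hence measurable, on all of `ℝ`. -/
def plateauEnd (C : ℝ → ℝ → ℝ) : ℝ → ℝ :=
  IccExtend zero_le_one fun v => plateauLength fun t => d1 C t v

def supportEnd (C : ℝ → ℝ → ℝ) : ℝ → ℝ :=
  IccExtend zero_le_one fun v => supportLength fun t => d1 C t v

/-- The value of `h_v` on `(A(v), B(v))`; when that interval is empty, `x / 0 = 0` makes it a
harmless `0`. -/
def middleValue (C : ℝ → ℝ → ℝ) (v : ℝ) : ℝ :=
  (v - plateauEnd C v) / (supportEnd C v - plateauEnd C v)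

namespace IsCopula

variable {C : ℝ → ℝ → ℝ} {u v v' : ℝ}

lemma monotoneOn_sub_left (hC : IsCopula C) (hv : v ∈ Icc (0:ℝ) 1) (hv' : v' ∈ Icc (0:ℝ) 1)
    (hvv' : v ≤ v') : MonotoneOn (fun u => C u v' - C u v) (Icc 0 1) := fun u₁ hu₁ u₂ hu₂ hu => by
  have := hC.2.2.2 u₁ hu₁ u₂ hu₂ v hv v' hv' hu hvv'
  dsimp only
  linarith

lemma monotoneOn_left (hC : IsCopula C) (hv : v ∈ Icc (0:ℝ) 1) :
    MonotoneOn (fun u => C u v) (Icc 0 1) :=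
  (hC.monotoneOn_sub_left (left_mem_Icc.2 zero_le_one) hv hv.1).congr fun u hu => by
    simp [(hC.2.1 u hu).1]

lemma monotoneOn_right (hC : IsCopula C) (hu : u ∈ Icc (0:ℝ) 1) : MonotoneOn (C u) (Icc 0 1) :=
  fun v₁ hv₁ v₂ hv₂ hv => by
    have := hC.2.2.2 0 (left_mem_Icc.2 zero_le_one) u hu v₁ hv₁ v₂ hv₂ hu.1 hv
    linarith [(hC.2.2.1 v₁ hv₁).1, (hC.2.2.1 v₂ hv₂).1]

lemma monotoneOn_diag (hC : IsCopula C) : MonotoneOn (fun v => C v v) (Icc 0 1) :=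
  fun _ hv _ hv' hvv' =>
    (hC.monotoneOn_left hv hv hv' hvv').trans (hC.monotoneOn_right hv' hv hv' hvv')

lemma lipschitzOnWith_left (hC : IsCopula C) (hv : v ∈ Icc (0:ℝ) 1) :
    LipschitzOnWith 1 (fun u => C u v) (Icc 0 1) :=
  lipschitzOnWith_one_of_monotoneOn_of_monotoneOn_sub (hC.monotoneOn_left hv)
    ((hC.monotoneOn_sub_left hv (right_mem_Icc.2 zero_le_one) hv.2).congr fun u hu => by
      simp [(hC.2.1 u hu).2])

lemma absolutelyContinuousOnInterval_left (hC : IsCopula C) (hv : v ∈ Icc (0:ℝ) 1) :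
    AbsolutelyContinuousOnInterval (fun u => C u v) 0 1 :=
  LipschitzOnWith.absolutelyContinuousOnInterval (by
    simpa [uIcc_of_le zero_le_one] using hC.lipschitzOnWith_left hv)

lemma d1_mem_Icc (hC : IsCopula C) (hv : v ∈ Icc (0:ℝ) 1) {t : ℝ} (ht : t ∈ Ioo (0:ℝ) 1) :
    d1 C t v ∈ Icc 0 1 := by
  have hI : Icc (0:ℝ) 1 ∈ 𝓝 t := Icc_mem_nhds ht.1 ht.2
  refine ⟨deriv_nonneg_of_monotoneOn hI (hC.monotoneOn_left hv), ?_⟩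
  simpa [d1] using
    (le_abs_self _).trans (norm_deriv_le_of_lipschitzOn hI (hC.lipschitzOnWith_left hv))

lemma ae_d1_mem_Icc (hC : IsCopula C) (hv : v ∈ Icc (0:ℝ) 1) :
    ∀ᵐ t ∂vol₀₁, d1 C t v ∈ Icc 0 1 :=
  (ae_restrict_congr_set Ioo_ae_eq_Icc).1
    (ae_restrict_of_forall_mem measurableSet_Ioo fun _ => hC.d1_mem_Icc hv)

lemma setIntegral_Ico_d1 (hC : IsCopula C) (hv : v ∈ Icc (0:ℝ) 1) {b : ℝ}
    (hb : b ∈ Icc (0:ℝ) 1) :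
    ∫ t in Ico 0 b, d1 C t v = C b v := by
  have hac := (hC.absolutelyContinuousOnInterval_left hv).mono
    (uIcc_subset_uIcc left_mem_uIcc (by rwa [uIcc_of_le zero_le_one]))
  rw [integral_Ico_eq_integral_Ioc, ← intervalIntegral.integral_of_le hb.1]
  unfold d1
  rw [hac.integral_deriv_eq_sub, (hC.2.2.1 v hv).1, sub_zero]

lemma setIntegral_Icc_d1 (hC : IsCopula C) (hv : v ∈ Icc (0:ℝ) 1) :
    ∫ t in Icc 0 1, d1 C t v = v := by
  rw [integral_Icc_eq_integral_Ico, hC.setIntegral_Ico_d1 hv (right_mem_Icc.2 zero_le_one),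
    (hC.2.2.1 v hv).2]

lemma ae_d1_le_d1 (hC : IsCopula C) (hv : v ∈ Icc (0:ℝ) 1) (hv' : v' ∈ Icc (0:ℝ) 1)
    (hvv' : v ≤ v') : ∀ᵐ t ∂vol₀₁, d1 C t v ≤ d1 C t v' := by
  refine (ae_restrict_congr_set Ioo_ae_eq_Icc).1 ?_
  rw [ae_restrict_iff' measurableSet_Ioo]
  filter_upwards [(hC.absolutelyContinuousOnInterval_left hv).ae_differentiableAt,
    (hC.absolutelyContinuousOnInterval_left hv').ae_differentiableAt] with t hd hd' ht
  have ht' : t ∈ uIcc (0:ℝ) 1 := by rw [uIcc_of_le zero_le_one]; exact Ioo_subset_Icc_self ht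
  have := deriv_nonneg_of_monotoneOn (Icc_mem_nhds ht.1 ht.2) (hC.monotoneOn_sub_left hv hv' hvv')
  rw [deriv_fun_sub (hd' ht') (hd ht')] at this
  exact sub_nonneg.1 this

lemma integral_sq_d1_le_diag (hC : IsCopula C) (hSI : IsSI C) (hv : v ∈ Icc (0:ℝ) 1) :
    ∫ t in (0:ℝ)..1, (d1 C t v) ^ 2 ≤ C v v := by
  obtain ⟨g, hg, hhg⟩ := hSI v hv
  rw [integral_sq_d1_eq_setIntegral, ← hC.setIntegral_Ico_d1 hv hv]
  exact integral_sq_le_setIntegral_Ico (measurable_d1 C v) (hC.ae_d1_mem_Icc hv) hv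
    (hC.setIntegral_Icc_d1 hv) hg hhg

lemma monotoneOn_integral_sq_d1 (hC : IsCopula C) :
    MonotoneOn (fun v => ∫ t in (0:ℝ)..1, (d1 C t v) ^ 2) (Icc 0 1) := by
  intro v hv v' hv' hvv'
  simp only [integral_sq_d1_eq_setIntegral]
  refine integral_mono_ae
    (integrable_sq_of_ae_mem_Icc (measurable_d1 C v).aemeasurable (hC.ae_d1_mem_Icc hv))
    (integrable_sq_of_ae_mem_Icc (measurable_d1 C v').aemeasurable (hC.ae_d1_mem_Icc hv')) ?_
  filter_upwards [hC.ae_d1_le_d1 hv hv' hvv', hC.ae_d1_mem_Icc hv] with t ht ht01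
  exact pow_le_pow_left₀ ht01.1 ht 2

theorem xi_eq_psi_iff (hC : IsCopula C) (hSI : IsSI C) :
    xi C = psi C ↔
      ∀ᵐ v ∂vol₀₁, ∫ t in (0:ℝ)..1, (d1 C t v) ^ 2 = C v v := by
  have hφ := (hC.monotoneOn_integral_sq_d1.mono (uIcc_of_le zero_le_one).subset).intervalIntegrable
    (μ := volume)
  have hdiag := (hC.monotoneOn_diag.mono (uIcc_of_le zero_le_one).subset).intervalIntegrable
    (μ := volume)
  have hle : (fun v => ∫ t in (0:ℝ)..1, (d1 C t v) ^ 2) ≤ᵐ[volume.restrict (Ioc 0 1)]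
      fun v => C v v :=
    ae_restrict_of_forall_mem measurableSet_Ioc fun v hv =>
      hC.integral_sq_d1_le_diag hSI (Ioc_subset_Icc_self hv)
  rw [← ae_restrict_congr_set Ioc_ae_eq_Icc]
  change _ ↔ (fun v => ∫ t in (0:ℝ)..1, (d1 C t v) ^ 2) =ᵐ[volume.restrict (Ioc 0 1)] _
  rw [← integral_eq_iff_of_ae_le hφ.1 hdiag.1 hle, xi, psi,
    intervalIntegral.integral_of_le zero_le_one, intervalIntegral.integral_of_le zero_le_one]
  constructor <;> intro h <;> linarith

lemma monotone_plateauEnd (hC : IsCopula C) : Monotone (plateauEnd C) :=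
  Monotone.IccExtend _ fun v v' hvv' =>
    measureReal_preimage_mono_of_ae_le (isUpperSet_Ici 1) (hC.ae_d1_le_d1 v.2 v'.2 hvv')

lemma monotone_supportEnd (hC : IsCopula C) : Monotone (supportEnd C) :=
  Monotone.IccExtend _ fun v v' hvv' =>
    measureReal_preimage_mono_of_ae_le (isUpperSet_Ioi 0) (hC.ae_d1_le_d1 v.2 v'.2 hvv')

lemma plateauEnd_mem_Icc (hC : IsCopula C) (hv : v ∈ Icc (0:ℝ) 1) : plateauEnd C v ∈ Icc 0 v := by
  have := plateauLength_mem_Icc (measurable_d1 C v) (hC.ae_d1_mem_Icc hv)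
  rw [hC.setIntegral_Icc_d1 hv] at this
  rwa [plateauEnd, IccExtend_of_mem zero_le_one _ hv]

lemma supportEnd_mem_Icc (hC : IsCopula C) (hv : v ∈ Icc (0:ℝ) 1) : supportEnd C v ∈ Icc v 1 := by
  have := supportLength_mem_Icc (measurable_d1 C v) (hC.ae_d1_mem_Icc hv)
  rw [hC.setIntegral_Icc_d1 hv] at this
  rwa [supportEnd, IccExtend_of_mem zero_le_one _ hv]

lemma middleValue_mem_Icc (hC : IsCopula C) (hv : v ∈ Icc (0:ℝ) 1) :
    middleValue C v ∈ Icc 0 1 := by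
  have hA := hC.plateauEnd_mem_Icc hv
  have hB := hC.supportEnd_mem_Icc hv
  have hAB : 0 ≤ supportEnd C v - plateauEnd C v := sub_nonneg.2 (hA.2.trans hB.1)
  exact ⟨div_nonneg (sub_nonneg.2 hA.2) hAB, div_le_one_of_le₀ (by linarith [hB.1]) hAB⟩

lemma ae_eq_stepProfile (hC : IsCopula C) (hSI : IsSI C) (hv : v ∈ Icc (0:ℝ) 1)
    (heq : ∫ t in (0:ℝ)..1, (d1 C t v) ^ 2 = C v v) :
    ∀ᵐ t ∂vol₀₁,
      d1 C t v = stepProfile (plateauEnd C v) (supportEnd C v) (middleValue C v) t := by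
  obtain ⟨g, hg, hhg⟩ := hSI v hv
  rw [middleValue, plateauEnd, supportEnd, IccExtend_of_mem zero_le_one _ hv,
    IccExtend_of_mem zero_le_one _ hv]
  refine ae_eq_stepProfile_of_integral_sq_eq (measurable_d1 C v) (hC.ae_d1_mem_Icc hv) hv
    (hC.setIntegral_Icc_d1 hv) hg hhg ?_
  rw [← integral_sq_d1_eq_setIntegral, heq, hC.setIntegral_Ico_d1 hv hv]

lemma integral_sq_d1_eq_diag (hC : IsCopula C) (hv : v ∈ Icc (0:ℝ) 1) {a b c : ℝ}
    (ha : a ∈ Icc (0:ℝ) 1) (hb : b ∈ Icc (0:ℝ) 1) (hc : c ∈ Icc (0:ℝ) 1)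
    (hstep : ∀ᵐ t ∂vol₀₁, d1 C t v = stepProfile a b c t) :
    ∫ t in (0:ℝ)..1, (d1 C t v) ^ 2 = C v v := by
  rw [integral_sq_d1_eq_setIntegral, ← hC.setIntegral_Ico_d1 hv hv]
  exact integral_sq_eq_of_ae_eq_stepProfile (measurable_d1 C v) (hC.ae_d1_mem_Icc hv) hv
    (hC.setIntegral_Icc_d1 hv) ha hb hc hstep

end IsCopula

/-- For a stochastically increasing copula `C` with `h_v(t) = ∂₁C(t,v)`:
`ξ(C) = ψ(C)` iff there are non-decreasing measurable `A, B : [0,1] → [0,1]` and a measurable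
`α : [0,1] → [0,1]` such that for a.e. `v`, `h_v(t) = 𝟙_{t < A(v)} + α(v)·𝟙_{(A(v),B(v))}(t)`
for a.e. `t`. -/
theorem si_equality_structure (C : ℝ → ℝ → ℝ) (hC : IsCopula C) (hSI : IsSI C) :
    xi C = psi C ↔
      ∃ A B α : ℝ → ℝ,
        Measurable A ∧ Measurable B ∧ Measurable α ∧
        MonotoneOn A (Icc (0:ℝ) 1) ∧ MonotoneOn B (Icc (0:ℝ) 1) ∧
        (∀ v ∈ Icc (0:ℝ) 1, A v ∈ Icc (0:ℝ) 1 ∧ B v ∈ Icc (0:ℝ) 1 ∧ α v ∈ Icc (0:ℝ) 1) ∧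
        (∀ᵐ v ∂(volume.restrict (Icc (0:ℝ) 1)),
          ∀ᵐ t ∂(volume.restrict (Icc (0:ℝ) 1)),
            d1 C t v =
              (if t < A v then (1:ℝ) else 0) +
                α v * (if t ∈ Ioo (A v) (B v) then (1:ℝ) else 0)) := by
  rw [hC.xi_eq_psi_iff hSI]
  constructor
  · intro hae
    have hA := hC.monotone_plateauEnd
    have hB := hC.monotone_supportEnd
    refine ⟨plateauEnd C, supportEnd C, middleValue C, hA.measurable, hB.measurable,
      (measurable_id.sub hA.measurable).div (hB.measurable.sub hA.measurable),
      hA.monotoneOn _, hB.monotoneOn _, fun v hv => ⟨?_, ?_, hC.middleValue_mem_Icc hv⟩, ?_⟩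
    · exact Icc_subset_Icc_right hv.2 (hC.plateauEnd_mem_Icc hv)
    · exact Icc_subset_Icc_left hv.1 (hC.supportEnd_mem_Icc hv)
    filter_upwards [hae, ae_restrict_mem measurableSet_Icc] with v hv_eq hv
    exact hC.ae_eq_stepProfile hSI hv hv_eq
  · rintro ⟨A, B, α, -, -, -, -, -, hmem, hstep⟩
    filter_upwards [hstep, ae_restrict_mem measurableSet_Icc] with v hv_step hv
    obtain ⟨hAv, hBv, hαv⟩ := hmem v hv
    exact hC.integral_sq_d1_eq_diag hv hAv hBv hαv hv_step
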